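/- Every unital (n+1)-Jordan homomorphism φ : A → B between unital complex algebras is an n-Jordan homomorphism: φ(aⁿ) = φ(a)ⁿ for all a ∈ A. -/
import Mathlib

open Finset Polynomial

/-- A module-valued polynomial function over `ℂ` that vanishes everywhere has
all coefficients zero. -/
lemma aux_coeffs_zero {B : Type*} [AddCommGroup B] [Module ℂ B] (N : ℕ) (c : ℕ → B)
    (h : ∀ t : ℂ, ∑ m ∈ Finset.range N, t ^ m • c m = 0) :
    ∀ m < N, c m = 0 := by
  intro m hm
  rw [← Module.forall_dual_apply_eq_zero_iff ℂ]
  intro ℓ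
  have hp0 : (∑ k ∈ Finset.range N, Polynomial.C (ℓ (c k)) * Polynomial.X ^ k : ℂ[X]) = 0 := by
    apply Polynomial.funext
    intro t
    have h2 := congrArg ℓ (h t)
    simp only [map_sum, map_smul, smul_eq_mul, map_zero] at h2
    simp only [Polynomial.eval_finset_sum, Polynomial.eval_mul, Polynomial.eval_C,
      Polynomial.eval_pow, Polynomial.eval_X, Polynomial.eval_zero]
    calc ∑ k ∈ Finset.range N, ℓ (c k) * t ^ k
        = ∑ k ∈ Finset.range N, t ^ k * ℓ (c k) :=
          Finset.sum_congr rfl fun k _ => mul_comm _ _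
      _ = 0 := h2
  have hco := congrArg (fun q => Polynomial.coeff q m) hp0
  simp only [Polynomial.finset_sum_coeff, Polynomial.coeff_C_mul, Polynomial.coeff_X_pow,
    Polynomial.coeff_zero, mul_ite, mul_one, mul_zero] at hco
  rwa [Finset.sum_ite_eq, if_pos (Finset.mem_range.mpr hm)] at hco

lemma binom_term {n : ℕ} {R : Type*} [Ring R] [Algebra ℂ R] (t : ℂ) (x : R) (k : ℕ) :
    x ^ k * (t • (1 : R)) ^ (n + 1 - k) * ((n + 1).choose k : R)
      = (t ^ (n + 1 - k) * ((n + 1).choose k : ℂ)) • x ^ k := by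
  rw [_root_.smul_pow, one_pow, mul_smul_comm, mul_one, smul_mul_assoc,
    ← (Nat.cast_commute ((n + 1).choose k) (x ^ k)).eq, ← nsmul_eq_mul,
    ← Nat.cast_smul_eq_nsmul ℂ, smul_smul]

/-- Every unital (n+1)-Jordan homomorphism between unital complex algebras
is an n-Jordan homomorphism. -/
theorem unital_succ_jordan_is_nJordan
    {A B : Type*} [Ring A] [Ring B] [Algebra ℂ A] [Algebra ℂ B]
    (n : ℕ) (hn : 2 ≤ n)
    (φ : A →ₗ[ℂ] B) (hu : φ 1 = 1)
    (hφ : ∀ a : A, φ (a ^ (n + 1)) = φ a ^ (n + 1)) :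
    ∀ a : A, φ (a ^ n) = φ a ^ n := by
  intro a
  set d : ℕ → B := fun k => (((n + 1).choose k : ℂ)) • (φ (a ^ k) - φ a ^ k) with hd
  have key : ∀ t : ℂ, ∑ m ∈ Finset.range (n + 2), t ^ m • d (n + 1 - m) = 0 := by
    intro t
    have hcA : Commute a (t • (1 : A)) := (Commute.one_right a).smul_right t
    have hcB : Commute (φ a) (t • (1 : B)) := (Commute.one_right (φ a)).smul_right t
    have expandA : (a + t • (1 : A)) ^ (n + 1)
        = ∑ k ∈ Finset.range (n + 2),
            (t ^ (n + 1 - k) * ((n + 1).choose k : ℂ)) • a ^ k := by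
      rw [hcA.add_pow]
      exact Finset.sum_congr rfl fun k _ => binom_term t a k
    have expandB : (φ a + t • (1 : B)) ^ (n + 1)
        = ∑ k ∈ Finset.range (n + 2),
            (t ^ (n + 1 - k) * ((n + 1).choose k : ℂ)) • φ a ^ k := by
      rw [hcB.add_pow]
      exact Finset.sum_congr rfl fun k _ => binom_term t (φ a) k
    have hmain : φ ((a + t • (1 : A)) ^ (n + 1)) = (φ a + t • (1 : B)) ^ (n + 1) := by
      rw [hφ]
      congr 1
      rw [map_add, map_smul, hu]
    rw [expandA, expandB, map_sum] at hmain
    simp only [map_smul] at hmain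
    have hsum : ∑ k ∈ Finset.range (n + 2), t ^ (n + 1 - k) • d k = 0 := by
      have h0 := sub_eq_zero_of_eq hmain
      rw [← Finset.sum_sub_distrib] at h0
      calc ∑ k ∈ Finset.range (n + 2), t ^ (n + 1 - k) • d k
          = ∑ k ∈ Finset.range (n + 2),
              ((t ^ (n + 1 - k) * ((n + 1).choose k : ℂ)) • φ (a ^ k)
                - (t ^ (n + 1 - k) * ((n + 1).choose k : ℂ)) • φ a ^ k) := by
            refine Finset.sum_congr rfl fun k _ => ?_
            rw [hd, ← smul_sub, smul_smul]
        _ = 0 := h0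
    have hre := Finset.sum_range_reflect (fun k => t ^ (n + 1 - k) • d k) (n + 2)
    rw [← hsum, ← hre]
    refine Finset.sum_congr rfl fun j hj => ?_
    have hj' : j ≤ n + 1 := by
      have := Finset.mem_range.mp hj; omega
    have e1 : n + 2 - 1 - j = n + 1 - j := by omega
    rw [e1, Nat.sub_sub_self hj']
  have hdn := aux_coeffs_zero (n + 2) (fun m => d (n + 1 - m)) key 1 (by omega)
  simp only [Nat.add_sub_cancel, hd] at hdn
  have hne : (((n + 1).choose n : ℂ)) ≠ 0 := by
    rw [Nat.choose_succ_self_right]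
    exact_mod_cast Nat.succ_ne_zero n
  rcases smul_eq_zero.mp hdn with h | h
  · exact absurd h hne
  · exact sub_eq_zero.mp h
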